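/- Let G_CR : {0,1}^{d_CR} → ({0,1}^d)^r be a PRG that ε_CR-fools (r,d)-combinatorial rectangles, and let G : {0,1}^d → {0,1}^t be a function that ε-fools a class F of Boolean functions on {0,1}^t. Then the composed generator s ↦ (G(G_CR(s)₁), …, G(G_CR(s)_r)) r-simultaneously (ε_CR + rε)-fools F. -/

import Mathlib

/-!
Pull the tests back along `G`: the functions `f i ∘ G` form a combinatorial rectangle, so
`G_CR` fools it up to `ε_CR`. Under truly uniform seeds the blocks are independent, so the
rectangle's probability is `∏ Pr[f i (G U_d)]`, and this differs from `∏ Pr[f i U_t]` by at most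
`r ε` because `|∏ pᵢ - ∏ qᵢ| ≤ ∑ |pᵢ - qᵢ|` for numbers of absolute value at most one.
-/

/-- Probability of an event under the uniform distribution on a finite type. -/
noncomputable def unifPr (Ω : Type) [Fintype Ω] (P : Ω → Prop) : ℝ :=
  (Nat.card {ω // P ω} : ℝ) / (Fintype.card Ω)

/-- Bit strings of length `n`. -/
abbrev Bits (n : ℕ) := Fin n → Bool

/-- Extend a finite bit string to an infinite one (padding with `false`). -/
def extBits {t : ℕ} (x : Bits t) : ℕ → Bool :=
  fun i => if h : i < t then x ⟨i, h⟩ else false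

/-- A unanimity program of length `n` with state set `Q`: it has an initial state,
a transition function for each layer, and accepting state sets for each layer;
it accepts iff every state visited (after each of the `n` steps) is accepting. -/
structure UP (Q : Type) (n : ℕ) where
  init : Q
  trans : ℕ → Q → Bool → Q
  acc : ℕ → Q → Prop

namespace UP
variable {Q : Type} {n : ℕ}

/-- The state after reading `i` bits of `x`. -/
def st (P : UP Q n) (x : ℕ → Bool) : ℕ → Q
  | 0 => P.init
  | i + 1 => P.trans i (st P x i) (x i)

/-- Unanimous acceptance: all states after steps `1, …, n` are accepting. -/
def accepts (P : UP Q n) (x : ℕ → Bool) : Prop :=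
  ∀ i, 1 ≤ i → i ≤ n → P.acc i (st P x i)

/-- Running the program from state `q` at layer `i` on a word. -/
def runFrom (P : UP Q n) : ℕ → Q → List Bool → Q
  | _, q, [] => q
  | i, q, b :: bs => runFrom P (i + 1) (P.trans i q b) bs

/-- A state is reachable in layer `i` if some input leads to it. -/
def Reachable (P : UP Q n) (i : ℕ) (q : Q) : Prop :=
  ∃ x : ℕ → Bool, st P x i = q

/-- Sliding-window property of window size `t`: reading any `t`-bit word from any
two reachable states of layer `i ≤ n - t` leads to the same state. -/
def IsSWBP (P : UP Q n) (t : ℕ) : Prop :=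
  ∀ i, i ≤ n - t → ∀ y : List Bool, y.length = t →
    ∀ q q', Reachable P i q → Reachable P i q' →
      runFrom P i q y = runFrom P i q' y

/-- Acceptance of a length-`n` input. -/
def acceptsInput (P : UP Q n) (x : Bits n) : Prop := P.accepts (extBits x)

end UP

/-- Interleaving `x₁y₁x₂y₂⋯x_my_m` of two `m`-tuples of `t`-bit blocks, as an
infinite bit string (positions beyond `2tm` are `false`). -/
def il {m t : ℕ} (x y : Fin m → Bits t) : ℕ → Bool := fun j =>
  if h : j / t / 2 < m ∧ j % t < t then
    (if (j / t) % 2 = 0 then x ⟨j / t / 2, h.1⟩ ⟨j % t, h.2⟩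
     else y ⟨j / t / 2, h.1⟩ ⟨j % t, h.2⟩)
  else false

/-- `X` (a random variable on the finite uniform sample space `Ω`)
`m`-simultaneously `ε`-fools width-`w`, length-`t` unanimity programs. -/
noncomputable def SimulFools (w t m : ℕ) (ε : ℝ) {Ω : Type} [Fintype Ω]
    (X : Ω → Fin m → Bits t) : Prop :=
  ∀ f : Fin m → UP (Fin w) t,
    |unifPr Ω (fun ω => ∀ i, (f i).acceptsInput (X ω i)) -
      ∏ i : Fin m, unifPr (Bits t) (fun u => (f i).acceptsInput u)| ≤ ε

/-- `X` `m`-simultaneously `ε`-hits width-`w`, length-`t` unanimity programs. -/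
noncomputable def SimulHits (w t m : ℕ) (ε : ℝ) {Ω : Type} [Fintype Ω]
    (X : Ω → Fin m → Bits t) : Prop :=
  ∀ f : Fin m → UP (Fin w) t,
    unifPr (Fin m → Bits t) (fun u => ∀ i, (f i).acceptsInput (u i)) ≥ ε →
    ∃ ω, ∀ i, (f i).acceptsInput (X ω i)

/-- A generator `G` `ε`-fools width-`w`, length-`t` unanimity programs. -/
noncomputable def Fools (w t d : ℕ) (ε : ℝ) (G : Bits d → Bits t) : Prop :=
  ∀ P : UP (Fin w) t,
    |unifPr (Bits d) (fun s => P.acceptsInput (G s)) -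
      unifPr (Bits t) (fun u => P.acceptsInput u)| ≤ ε

/-- Statistical distance between (the distributions of) two random variables. -/
noncomputable def SD {Ω₁ Ω₂ V : Type} [Fintype Ω₁] [Fintype Ω₂] [Fintype V]
    (X : Ω₁ → V) (Y : Ω₂ → V) : ℝ :=
  (1 / 2) * ∑ v : V, |unifPr Ω₁ (fun ω => X ω = v) - unifPr Ω₂ (fun ω => Y ω = v)|

/-- A `(k, ε)`-extractor: for every source of min-entropy at least `k`
(every point has probability at most `2^(-k)`), the output is `ε`-close to uniform. -/
noncomputable def IsExtractor {nn dd mm : ℕ} (k ε : ℝ)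
    (Ext : Bits nn → Bits dd → Bits mm) : Prop :=
  ∀ (Ω : Type) [Fintype Ω], ∀ Z : Ω → Bits nn,
    (∀ v, unifPr Ω (fun ω => Z ω = v) ≤ (2 : ℝ) ^ (-k)) →
    SD (fun p : Ω × Bits dd => Ext (Z p.1) p.2) (id : Bits mm → Bits mm) ≤ ε

/-- A standard (ordered read-once) branching program: accepts based only on its
final state. -/
structure BP (Q : Type) (n : ℕ) where
  init : Q
  trans : ℕ → Q → Bool → Q
  accFinal : Q → Prop

namespace BP
variable {Q : Type} {n : ℕ}

def st (P : BP Q n) (x : ℕ → Bool) : ℕ → Q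
  | 0 => P.init
  | i + 1 => P.trans i (st P x i) (x i)

def acceptsInput (P : BP Q n) (x : Bits n) : Prop := P.accFinal (st P (extBits x) n)

def runFrom (P : BP Q n) : ℕ → Q → List Bool → Q
  | _, q, [] => q
  | i, q, b :: bs => runFrom P (i + 1) (P.trans i q b) bs

def Reachable (P : BP Q n) (i : ℕ) (q : Q) : Prop :=
  ∃ x : ℕ → Bool, st P x i = q

end BP

/-- A probabilistic ACA (PACA): two local transition functions selected by a coin,
with boundary symbols modeled via `Option`, and a set of accepting states. -/
structure PACA (Q : Type) where
  delta : Bool → Option Q → Q → Option Q → Q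
  acc : Q → Prop

/-- Neighboring cell content (`none` beyond the boundary). -/
def nbOpt {Q : Type} {n : ℕ} (s : Fin n → Q) (j : ℤ) : Option Q :=
  if h : 0 ≤ j ∧ j < n then some (s ⟨j.toNat, by omega⟩) else none

namespace PACA
variable {Q : Type} {n : ℕ}

/-- One global step with coin tosses `r` (cell `i` uses `δ_{r i}`). -/
def step (C : PACA Q) (s : Fin n → Q) (r : Fin n → Bool) : Fin n → Q :=
  fun i => C.delta (r i) (nbOpt s ((i : ℤ) - 1)) (s i) (nbOpt s ((i : ℤ) + 1))

/-- The configuration after `k` steps on input `x` with coin matrix `R`. -/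
def conf (C : PACA Q) (x : Fin n → Q) (R : ℕ → Fin n → Bool) : ℕ → Fin n → Q
  | 0 => x
  | k + 1 => C.step (conf C x R k) (R k)

/-- All cells are simultaneously accepting. -/
def allAcc (C : PACA Q) (s : Fin n → Q) : Prop := ∀ i, C.acc (s i)

end PACA

/-- Extend a `T × n` coin matrix to all times (all-`false` rows beyond `T`). -/
def extR {T n : ℕ} (R : Fin T → Fin n → Bool) : ℕ → Fin n → Bool :=
  fun k => if h : k < T then R ⟨k, h⟩ else fun _ => false

/-- Simultaneous hitting for an abstract class `F` of predicates on `V`. -/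
noncomputable def SimulHitsF {V : Type} [Fintype V] (F : Set (V → Prop)) (m : ℕ) (ε : ℝ)
    {Ω : Type} [Fintype Ω] (X : Ω → Fin m → V) : Prop :=
  ∀ f : Fin m → V → Prop, (∀ i, f i ∈ F) →
    unifPr (Fin m → V) (fun u => ∀ i, f i (u i)) ≥ ε →
    ∃ ω, ∀ i, f i (X ω i)

/-- A PRG `ε`-fooling `(r, d)`-combinatorial rectangles. -/
noncomputable def FoolsRect {dCR r d : ℕ} (ε : ℝ) (GCR : Bits dCR → Fin r → Bits d) : Prop :=
  ∀ f : Fin r → Bits d → Bool,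
    |unifPr (Bits dCR) (fun s => ∀ i, f i (GCR s i) = true) -
      unifPr (Fin r → Bits d) (fun u => ∀ i, f i (u i) = true)| ≤ ε


section UniformProbability

variable (Ω : Type) [Fintype Ω] (P : Ω → Prop)

lemma unifPr_nonneg : 0 ≤ unifPr Ω P := by
  unfold unifPr; positivity

lemma unifPr_le_one : unifPr Ω P ≤ 1 := by
  classical
  unfold unifPr
  rw [Nat.card_eq_fintype_card]
  exact div_le_one_of_le₀ (mod_cast Fintype.card_subtype_le P) (Nat.cast_nonneg _)

lemma norm_unifPr_le_one : ‖unifPr Ω P‖ ≤ 1 := by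
  rw [Real.norm_of_nonneg (unifPr_nonneg Ω P)]
  exact unifPr_le_one Ω P

end UniformProbability

lemma unifPr_pi {ι : Type} [Fintype ι] [DecidableEq ι] {V : ι → Type} [∀ i, Fintype (V i)]
    (g : ∀ i, V i → Prop) :
    unifPr (∀ i, V i) (fun u => ∀ i, g i (u i)) = ∏ i, unifPr (V i) (g i) := by
  unfold unifPr
  rw [Nat.card_congr (Equiv.subtypePiEquivPi (p := g)), Nat.card_pi, Fintype.card_pi,
    Nat.cast_prod, Nat.cast_prod, Finset.prod_div_distrib]

lemma norm_prod_sub_prod_le_sum_norm_sub {ι R : Type*} [NormedCommRing R] [NormOneClass R]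
    (s : Finset ι) (p q : ι → R) (hp : ∀ i ∈ s, ‖p i‖ ≤ 1) (hq : ∀ i ∈ s, ‖q i‖ ≤ 1) :
    ‖∏ i ∈ s, p i - ∏ i ∈ s, q i‖ ≤ ∑ i ∈ s, ‖p i - q i‖ := by
  classical
  induction s using Finset.induction with
  | empty => simp
  | insert a s ha ih =>
    rw [Finset.prod_insert ha, Finset.prod_insert ha, Finset.sum_insert ha]
    have hps : ∀ i ∈ s, ‖p i‖ ≤ 1 := fun i hi => hp i (Finset.mem_insert_of_mem hi)
    have hqs : ∀ i ∈ s, ‖q i‖ ≤ 1 := fun i hi => hq i (Finset.mem_insert_of_mem hi)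
    have hQ : ‖∏ i ∈ s, q i‖ ≤ 1 :=
      (Finset.norm_prod_le s q).trans (Finset.prod_le_one (fun _ _ => norm_nonneg _) hqs)
    calc ‖p a * ∏ i ∈ s, p i - q a * ∏ i ∈ s, q i‖
        = ‖p a * (∏ i ∈ s, p i - ∏ i ∈ s, q i) + (p a - q a) * ∏ i ∈ s, q i‖ := by
          congr 1; ring
      _ ≤ ‖p a‖ * ‖∏ i ∈ s, p i - ∏ i ∈ s, q i‖ + ‖p a - q a‖ * ‖∏ i ∈ s, q i‖ :=
          (norm_add_le _ _).trans (add_le_add (norm_mul_le _ _) (norm_mul_le _ _))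
      _ ≤ 1 * ∑ i ∈ s, ‖p i - q i‖ + ‖p a - q a‖ * 1 := by
          gcongr
          exacts [hp a (Finset.mem_insert_self a s), ih hps hqs]
      _ = ‖p a - q a‖ + ∑ i ∈ s, ‖p i - q i‖ := by ring

/-- composing a PRG for combinatorial rectangles with a generator
`ε`-fooling a class `F` yields an `r`-simultaneous `(ε_CR + rε)`-fooling
generator for `F`. -/
theorem rectangle_composition {dCR r d t : ℕ} {εCR ε : ℝ}
    (GCR : Bits dCR → Fin r → Bits d) (hCR : FoolsRect εCR GCR)
    (F : Set (Bits t → Bool)) (G : Bits d → Bits t)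
    (hG : ∀ f ∈ F, |unifPr (Bits d) (fun s => f (G s) = true) -
      unifPr (Bits t) (fun u => f u = true)| ≤ ε) :
    ∀ f : Fin r → Bits t → Bool, (∀ i, f i ∈ F) →
      |unifPr (Bits dCR) (fun s => ∀ i, f i (G (GCR s i)) = true) -
        ∏ i : Fin r, unifPr (Bits t) (fun u => f i u = true)| ≤ εCR + r * ε := by
  intro f hf
  have hrect := hCR fun i x => f i (G x)
  rw [unifPr_pi (fun i x => f i (G x) = true)] at hrect
  have hprod : |∏ i, unifPr (Bits d) (fun s => f i (G s) = true) -
      ∏ i, unifPr (Bits t) (fun u => f i u = true)| ≤ r * ε :=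
    calc _ ≤ ∑ i, |unifPr (Bits d) (fun s => f i (G s) = true) -
          unifPr (Bits t) (fun u => f i u = true)| :=
          norm_prod_sub_prod_le_sum_norm_sub _ _ _ (fun _ _ => norm_unifPr_le_one _ _)
            (fun _ _ => norm_unifPr_le_one _ _)
      _ ≤ ∑ _i : Fin r, ε := Finset.sum_le_sum fun i _ => hG (f i) (hf i)
      _ = r * ε := by simp
  exact (abs_sub_le _ _ _).trans (add_le_add hrect hprod)
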